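/- arXiv:2502.12615 — 8 statements merged into one kernel-verified Lean document; each statement's English description precedes it below -/
import Mathlib

section
/- For every integer k ≥ 1 and every n ≥ 0, one has F_k(L_k(n)) = n, and L_k(F_k(n)) ∈ {n, n+1}. Consequently F_k and L_k form a Galois insertion: for all n, m ≥ 0, F_k(n) ≤ m if and only if n ≤ L_k(m). -/
/-- Fuel-limited version of Hofstadter's recursion:
`Fa k fuel n` equals `F_k n` whenever `fuel ≥ n`. -/
def Fa (k : ℕ) : ℕ → ℕ → ℕ
  | 0, _ => 0
  | _ + 1, 0 => 0
  | fuel + 1, n + 1 => (n + 1) - (Fa k fuel)^[k] n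

/-- Hofstadter's function `F_k` : `F k 0 = 0` and `F k n = n - (F k)^[k] (n-1)`
for `n ≥ 1` (since `F_k m ≤ m`, the fuel `n` is always sufficient). -/
def F (k : ℕ) (n : ℕ) : ℕ := Fa k n n

/-- The function `L_k n = n + (F k)^[k-1] n`. -/
def L (k : ℕ) (n : ℕ) : ℕ := n + (F k)^[k - 1] n

/-!
`F_k` starts at `0` and increases by `0` or `1` at each step; this follows by strong induction from
`F_k (n+1) + F_k^k n = n + 1`, since `F_k^k` inherits the step property below `n`. The same
identity gives `L_k (F_k n) = n + 1 - (F_k (n+1) - F_k n)`, which is `n` or `n + 1`, and in the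
latter case `F_k (n+1) = F_k n`; so `F_k ∘ L_k ∘ F_k = F_k`. As `n ≤ 2 F_k n`, the discrete
intermediate value theorem makes `F_k` surjective, whence `F_k ∘ L_k = id`, and the Galois
connection follows from monotonicity.
-/

lemma Set.EqOn.iterate {α : Type*} {f g : α → α} {s : Set α} (h : Set.EqOn f g s)
    (hf : Set.MapsTo f s s) (n : ℕ) : Set.EqOn f^[n] g^[n] s := by
  induction n with
  | zero => exact fun _ _ => rfl
  | succ n ih =>
    intro x hx
    rw [Function.iterate_succ_apply, Function.iterate_succ_apply, ih (hf hx), h hx]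

lemma Nat.exists_apply_eq_of_apply_succ_le {f : ℕ → ℕ} (hf : ∀ n, f (n + 1) ≤ f n + 1)
    {v : ℕ} (h0 : f 0 ≤ v) : ∀ m, v ≤ f m → ∃ j, f j = v
  | 0, hv => ⟨0, le_antisymm h0 hv⟩
  | m + 1, hv => by
    by_cases hm : v ≤ f m
    · exact Nat.exists_apply_eq_of_apply_succ_le hf h0 m hm
    · exact ⟨m + 1, by linarith [hf m]⟩

lemma Nat.iterate_succ_eq_or_eq_add_one {f : ℕ → ℕ} {m : ℕ} (hf : f ≤ id)
    (hstep : ∀ x ≤ m, f (x + 1) = f x ∨ f (x + 1) = f x + 1) (j : ℕ) :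
    f^[j] (m + 1) = f^[j] m ∨ f^[j] (m + 1) = f^[j] m + 1 := by
  induction j with
  | zero => exact Or.inr rfl
  | succ j ih =>
    rw [Function.iterate_succ_apply', Function.iterate_succ_apply']
    rcases ih with h | h
    · exact Or.inl (by rw [h])
    · rw [h]
      exact hstep _ (Function.iterate_le_id_of_le_id hf j m)

lemma Fa_le (k fuel n : ℕ) : Fa k fuel n ≤ n := by
  match fuel, n with
  | 0, n => simp [Fa]
  | fuel + 1, 0 => simp [Fa]
  | fuel + 1, n + 1 => rw [Fa]; omega

lemma mapsTo_Fa_Iic (k fuel n : ℕ) : Set.MapsTo (Fa k fuel) (Set.Iic n) (Set.Iic n) :=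
  fun x hx => (Fa_le k fuel x).trans hx

lemma Fa_eq_of_le (k : ℕ) {n a b : ℕ} (ha : n ≤ a) (hb : n ≤ b) : Fa k a n = Fa k b n := by
  induction n using Nat.strong_induction_on generalizing a b with
  | _ n ih =>
    rcases n with _ | n
    · cases a <;> cases b <;> rfl
    obtain ⟨a, rfl⟩ : ∃ a', a = a' + 1 := ⟨a - 1, by omega⟩
    obtain ⟨b, rfl⟩ : ∃ b', b = b' + 1 := ⟨b - 1, by omega⟩
    have hab : Set.EqOn (Fa k a) (Fa k b) (Set.Iic n) := fun x (hx : x ≤ n) =>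
      ih x (by omega) (by omega) (by omega)
    rw [Fa, Fa, hab.iterate (mapsTo_Fa_Iic k a n) k (Set.mem_Iic.2 le_rfl)]

lemma Fa_eq_F (k : ℕ) {fuel n : ℕ} (hn : n ≤ fuel) : Fa k fuel n = F k n :=
  Fa_eq_of_le k hn le_rfl

lemma F_le_id (k : ℕ) : F k ≤ id := fun n => Fa_le k n n

lemma F_zero (k : ℕ) : F k 0 = 0 := rfl

lemma F_succ_add_iterate (k n : ℕ) : F k (n + 1) + (F k)^[k] n = n + 1 := by
  have hFa : Set.EqOn (Fa k n) (F k) (Set.Iic n) := fun _ hx => Fa_eq_F k hx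
  have hiter : (Fa k n)^[k] n = (F k)^[k] n :=
    hFa.iterate (mapsTo_Fa_Iic k n n) k (Set.mem_Iic.2 le_rfl)
  have hle : (F k)^[k] n ≤ n := Function.iterate_le_id_of_le_id (F_le_id k) k n
  change Fa k (n + 1) (n + 1) + _ = _
  rw [Fa, hiter]
  omega

lemma F_succ_eq_or_eq_add_one (k n : ℕ) : F k (n + 1) = F k n ∨ F k (n + 1) = F k n + 1 := by
  induction n using Nat.strong_induction_on with
  | _ n ih =>
    rcases n with _ | m
    · have := F_succ_add_iterate k 0
      rw [Function.iterate_fixed (F_zero k)] at this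
      rw [F_zero]
      omega
    have hiter := Nat.iterate_succ_eq_or_eq_add_one (F_le_id k)
      (fun x hx => ih x (Nat.lt_succ_of_le hx)) k
    have h1 := F_succ_add_iterate k (m + 1)
    have h2 := F_succ_add_iterate k m
    omega

lemma F_mono (k : ℕ) : Monotone (F k) :=
  monotone_nat_of_le_succ fun n => by rcases F_succ_eq_or_eq_add_one k n with h | h <;> omega

lemma L_mono (k : ℕ) : Monotone (L k) :=
  fun _ _ hab => Nat.add_le_add hab ((F_mono k).iterate (k - 1) hab)

lemma L_F_add_F_succ (k : ℕ) (hk : 1 ≤ k) (n : ℕ) :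
    L k (F k n) + F k (n + 1) = n + 1 + F k n := by
  have hL : L k (F k n) = F k n + (F k)^[k] n := by
    rw [L, ← Function.iterate_succ_apply, Nat.succ_eq_add_one, Nat.sub_add_cancel hk]
  have := F_succ_add_iterate k n
  omega

lemma L_F (k : ℕ) (hk : 1 ≤ k) (n : ℕ) : L k (F k n) = n ∨ L k (F k n) = n + 1 := by
  have := L_F_add_F_succ k hk n
  rcases F_succ_eq_or_eq_add_one k n with h | h <;> omega

lemma F_L_F (k : ℕ) (hk : 1 ≤ k) (n : ℕ) : F k (L k (F k n)) = F k n := by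
  have := L_F_add_F_succ k hk n
  rcases F_succ_eq_or_eq_add_one k n with h | h
  · rw [show L k (F k n) = n + 1 by omega, h]
  · rw [show L k (F k n) = n by omega]

lemma le_two_mul_F (k : ℕ) (hk : 1 ≤ k) (n : ℕ) : n ≤ 2 * F k n := by
  rcases n with _ | m
  · exact Nat.zero_le _
  have hiter : (F k)^[k] m ≤ F k m := by
    rw [← Nat.sub_add_cancel hk, Function.iterate_succ_apply, Nat.sub_add_cancel hk]
    exact Function.iterate_le_id_of_le_id (F_le_id k) _ _
  have := F_succ_add_iterate k m
  have := F_mono k (Nat.le_add_right m 1)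
  omega

lemma F_surjective (k : ℕ) (hk : 1 ≤ k) : Function.Surjective (F k) := fun v => by
  have hstep (n : ℕ) : F k (n + 1) ≤ F k n + 1 := by
    rcases F_succ_eq_or_eq_add_one k n with h | h <;> omega
  have h0 : F k 0 ≤ v := (F_zero k).trans_le v.zero_le
  have hv : v ≤ F k (2 * v) := by linarith [le_two_mul_F k hk (2 * v)]
  exact Nat.exists_apply_eq_of_apply_succ_le hstep h0 (2 * v) hv

lemma F_L (k : ℕ) (hk : 1 ≤ k) (n : ℕ) : F k (L k n) = n := by
  obtain ⟨m, rfl⟩ := F_surjective k hk n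
  exact F_L_F k hk m

lemma galoisConnection_F_L (k : ℕ) (hk : 1 ≤ k) : GaloisConnection (F k) (L k) :=
  GaloisConnection.monotone_intro (L_mono k) (F_mono k)
    (fun n => by rcases L_F k hk n with h | h <;> omega) (fun n => (F_L k hk n).le)

/-- For `k ≥ 1`: `F_k (L_k n) = n`, `L_k (F_k n) ∈ {n, n+1}`, and `F_k`, `L_k`
form a Galois insertion: `F_k n ≤ m ↔ n ≤ L_k m`. -/
theorem F_L_galois_insertion (k : ℕ) (hk : 1 ≤ k) :
    (∀ n : ℕ, F k (L k n) = n) ∧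
    (∀ n : ℕ, L k (F k n) = n ∨ L k (F k n) = n + 1) ∧
    (∀ n m : ℕ, F k n ≤ m ↔ n ≤ L k m) :=
  ⟨F_L k hk, L_F k hk, galoisConnection_F_L k hk⟩
end

section
/- For every integer k ≥ 1 and every p ≥ 0, A_{k,p} equals the number of subsets S of {1, …, p} such that any two distinct elements of S differ by at least k. -/
/-!
Both sides satisfy `x (p + 1) = x p + x (p + 1 - k)` with `x 0 = 1`. For `A` this is the
defining recursion, extended to `p + 1 < k` where `A k p = p + 1` and `A k 0 = 1`. For the
subsets, split a `k`-sparse `S ⊆ {1, …, p + 1}` according to whether `p + 1 ∈ S`: if not,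
`S ⊆ {1, …, p}`; if so, `S \ {p + 1}` is an arbitrary `k`-sparse subset of `{1, …, p + 1 - k}`.
-/

/-- The Fibonacci-like sequence `A_{k,p}` : `A k p = p+1` for `p < k`,
and `A k p = A k (p-1) + A k (p-k)` for `p ≥ k`.
(The `max k 1` only makes termination evident; in all statements `k ≥ 1`.) -/
def A (k : ℕ) : ℕ → ℕ
  | 0 => 1
  | p + 1 => if p + 1 < k then p + 2 else A k p + A k (p + 1 - max k 1)
termination_by p => p
decreasing_by all_goals omega

open Finset

section A

variable (k : ℕ)

theorem A_zero : A k 0 = 1 := by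
  rw [A]

theorem A_of_lt : ∀ p, p < k → A k p = p + 1
  | 0, _ => A_zero k
  | p + 1, h => by rw [A, if_pos h]

variable {k}

theorem A_succ (hk : 1 ≤ k) (p : ℕ) : A k (p + 1) = A k p + A k (p + 1 - k) := by
  rw [A, max_eq_left hk]
  split_ifs with h
  · rw [A_of_lt k p (by omega), Nat.sub_eq_zero_of_le h.le, A_zero]
  · rfl

end A

def sparseSubsets (k n : ℕ) : Finset (Finset ℕ) :=
  (Icc 1 n).powerset.filter (fun S => ∀ a ∈ S, ∀ b ∈ S, a ≠ b → k ≤ Nat.dist a b)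

namespace sparseSubsets

variable {k n : ℕ} {S T : Finset ℕ}

theorem mem_iff :
    S ∈ sparseSubsets k n ↔
      (∀ a ∈ S, 1 ≤ a ∧ a ≤ n) ∧ ∀ a ∈ S, ∀ b ∈ S, a ≠ b → k ≤ Nat.dist a b := by
  simp only [sparseSubsets, mem_filter, mem_powerset, subset_iff, mem_Icc]

theorem card_zero : (sparseSubsets k 0).card = 1 := by
  rw [card_eq_one]
  refine ⟨∅, eq_singleton_iff_unique_mem.2 ⟨?_, fun S hS => ?_⟩⟩
  · simp [mem_iff]
  · exact eq_empty_of_forall_notMem fun a ha => by have := (mem_iff.1 hS).1 a ha; omega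

theorem filter_notMem_succ :
    (sparseSubsets k (n + 1)).filter (fun S => n + 1 ∉ S) = sparseSubsets k n := by
  ext S
  simp only [mem_filter, mem_iff]
  constructor
  · rintro ⟨⟨hS, hsparse⟩, hn⟩
    refine ⟨fun a ha => ?_, hsparse⟩
    have := hS a ha
    have : a ≠ n + 1 := ne_of_mem_of_not_mem ha hn
    omega
  · rintro ⟨hS, hsparse⟩
    exact ⟨⟨fun a ha => by have := hS a ha; omega, hsparse⟩,
      fun hn => by have := hS _ hn; omega⟩

theorem erase_top_mem (hS : S ∈ sparseSubsets k (n + 1)) (htop : n + 1 ∈ S) :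
    S.erase (n + 1) ∈ sparseSubsets k (n + 1 - k) := by
  obtain ⟨hrange, hsparse⟩ := mem_iff.1 hS
  refine mem_iff.2 ⟨fun a ha => ?_,
    fun a ha b hb => hsparse a (mem_of_mem_erase ha) b (mem_of_mem_erase hb)⟩
  obtain ⟨hne, ha⟩ := mem_erase.1 ha
  have := hrange a ha
  have := hsparse a ha _ htop hne
  simp only [Nat.dist] at this
  omega

theorem insert_top_mem (hT : T ∈ sparseSubsets k (n + 1 - k)) :
    insert (n + 1) T ∈ sparseSubsets k (n + 1) := by
  obtain ⟨hrange, hsparse⟩ := mem_iff.1 hT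
  have hfar : ∀ a ∈ T, k ≤ Nat.dist a (n + 1) := fun a ha => by
    have := hrange a ha
    simp only [Nat.dist]
    omega
  refine mem_iff.2 ⟨fun a ha => ?_, fun a ha b hb hne => ?_⟩
  · rcases mem_insert.1 ha with rfl | ha
    · omega
    · have := hrange a ha
      omega
  · rcases mem_insert.1 ha with rfl | ha <;> rcases mem_insert.1 hb with rfl | hb
    · exact absurd rfl hne
    · exact Nat.dist_comm b _ ▸ hfar b hb
    · exact hfar a ha
    · exact hsparse a ha b hb hne

theorem card_filter_mem_succ (hk : 1 ≤ k) :
    ((sparseSubsets k (n + 1)).filter (fun S => n + 1 ∈ S)).card =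
      (sparseSubsets k (n + 1 - k)).card := by
  apply card_nbij' (fun S => S.erase (n + 1)) (insert (n + 1))
  · intro S hS
    obtain ⟨hS, htop⟩ := mem_filter.1 hS
    exact erase_top_mem hS htop
  · intro T hT
    exact mem_filter.2 ⟨insert_top_mem hT, mem_insert_self _ _⟩
  · intro S hS
    exact insert_erase (mem_filter.1 hS).2
  · intro T hT
    exact erase_insert fun h => by have := (mem_iff.1 hT).1 _ h; omega

theorem card_succ (hk : 1 ≤ k) (n : ℕ) :
    (sparseSubsets k (n + 1)).card =
      (sparseSubsets k n).card + (sparseSubsets k (n + 1 - k)).card := by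
  rw [← card_filter_add_card_filter_not (fun S => n + 1 ∈ S), filter_notMem_succ,
    card_filter_mem_succ hk, add_comm]

end sparseSubsets

/-- `A_{k,p}` counts the subsets of `{1, …, p}` whose distinct elements
differ by at least `k`. -/
theorem A_eq_card_sparse_subsets (k : ℕ) (hk : 1 ≤ k) (p : ℕ) :
    A k p = ((Finset.Icc 1 p).powerset.filter
      (fun S => ∀ a ∈ S, ∀ b ∈ S, a ≠ b → k ≤ Nat.dist a b)).card := by
  change A k p = (sparseSubsets k p).card
  induction p using Nat.strong_induction_on with
  | _ p ih =>
    cases p with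
    | zero => rw [A_zero, sparseSubsets.card_zero]
    | succ p =>
      rw [A_succ hk, sparseSubsets.card_succ hk, ih p (by omega), ih (p + 1 - k) (by omega)]
end

section
/- As k → ∞, β_k = 1 + ln(k)/k + o(ln(k)/k) and α_k = 1 − ln(k)/k + o(ln(k)/k); equivalently, k·(β_k − 1)/ln k → 1 and k·(1 − α_k)/ln k → 1 as k → ∞. -/
/-!
Writing `t = 1 - α_k`, the equation becomes `(1 - t) ^ k = t`, and `c ↦ (1 - c) ^ k - c` is
decreasing, so `t` is located by testing candidates `c`. Since `(1 - c) ^ k ≈ exp (-k c)`, the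
candidates `log k / k` and `(log k - 2 log log k) / k` lie on either side of the root, whence
`1 - 2 log log k / log k ≤ k t / log k ≤ 1`. Finally `β_k - 1 = (1 - α_k) / α_k`, since
`β_k = 1 / α_k` (`x ↦ x ^ k + x` is injective on `[0, ∞)`), and `α_k → 1`.
-/

open Filter Real Topology

lemma exp_neg_mul_div_one_sub_le_one_sub_pow {c : ℝ} (hc : c < 1) (k : ℕ) :
    exp (-(k * c / (1 - c))) ≤ (1 - c) ^ k := by
  have hpos : 0 < 1 - c := by linarith
  have hlog : -(c / (1 - c)) ≤ log (1 - c) := by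
    have := one_sub_inv_le_log_of_pos hpos
    rwa [show 1 - (1 - c)⁻¹ = -(c / (1 - c)) by field_simp; ring] at this
  rw [← exp_log (pow_pos hpos k), log_pow, mul_div_assoc, ← mul_neg]
  exact exp_le_exp.2 (mul_le_mul_of_nonneg_left hlog k.cast_nonneg)

section RootComparison

variable {k : ℕ} {t c : ℝ}

lemma le_of_one_sub_pow_le (ht : t < 1) (heq : (1 - t) ^ k = t) (hc : (1 - c) ^ k ≤ c) :
    t ≤ c := by
  by_contra! h
  have := pow_le_pow_left₀ (by linarith) (by linarith : 1 - t ≤ 1 - c) k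
  linarith

lemma le_of_le_one_sub_pow (heq : (1 - t) ^ k = t) (hc1 : c ≤ 1) (hc : c ≤ (1 - c) ^ k) :
    c ≤ t := by
  by_contra! h
  have := pow_le_pow_left₀ (by linarith) (by linarith : 1 - c ≤ 1 - t) k
  linarith

lemma mul_le_log_of_one_sub_pow_eq (hk : 1 ≤ log k) (ht : t < 1) (heq : (1 - t) ^ k = t) :
    k * t ≤ log k := by
  have hk0 : (0 : ℝ) < k := k.cast_nonneg.lt_of_ne fun h => by
    rw [← h, log_zero] at hk; norm_num at hk
  rw [← le_div_iff₀' hk0]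
  refine le_of_one_sub_pow_le ht heq ?_
  calc (1 - log k / k) ^ k ≤ exp (-log k) := one_sub_div_pow_le_exp_neg (log_le_self hk0.le)
    _ = 1 / k := by rw [exp_neg, exp_log hk0, one_div]
    _ ≤ log k / k := by gcongr

lemma log_sub_two_log_log_le_mul_of_one_sub_pow_eq (hL : 1 ≤ log (log k))
    (hk : log k ^ 2 ≤ k) (heq : (1 - t) ^ k = t) :
    log k - 2 * log (log k) ≤ k * t := by
  have hL0 : 0 < log (k : ℝ) := (log_natCast_nonneg k).lt_of_ne fun h => by
    rw [← h, log_zero] at hL; norm_num at hL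
  have hk0 : (0 : ℝ) < k := lt_of_lt_of_le (by positivity) hk
  set L := log (k : ℝ) with hLdef
  have hLL : log L ≤ L - 1 := log_le_sub_one_of_pos hL0
  set c := (L - 2 * log L) / k
  have hcL : c ≤ 1 / L := by
    rw [div_le_div_iff₀ hk0 hL0]; nlinarith
  have hc1 : c < 1 := hcL.trans_lt <| by rw [div_lt_one hL0]; linarith
  have hkc : k * c = L - 2 * log L := by simp only [c]; field_simp
  rw [← div_le_iff₀' hk0]
  refine le_of_le_one_sub_pow heq hc1.le ?_
  have hexp : log L - L ≤ -(k * c / (1 - c)) := by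
    have hcLL : c * (L - log L) ≤ 1 := calc
      c * (L - log L) ≤ 1 / L * (L - log L) := mul_le_mul_of_nonneg_right hcL (by linarith)
      _ ≤ 1 := by rw [one_div_mul_eq_div, div_le_one hL0]; linarith
    rw [hkc, le_neg, neg_sub, div_le_iff₀ (by linarith)]
    nlinarith
  calc c ≤ L / k := div_le_div_of_nonneg_right (by linarith) hk0.le
    _ = exp (log L - L) := by rw [exp_sub, exp_log hL0, hLdef, exp_log hk0]
    _ ≤ exp (-(k * c / (1 - c))) := exp_le_exp.2 hexp
    _ ≤ (1 - c) ^ k := exp_neg_mul_div_one_sub_le_one_sub_pow hc1 k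

end RootComparison

lemma tendsto_natCast_log_atTop : Tendsto (fun k : ℕ => log k) atTop atTop :=
  tendsto_log_atTop.comp tendsto_natCast_atTop_atTop

theorem tendsto_mul_div_log_of_one_sub_pow_eq {t : ℕ → ℝ}
    (ht : ∀ᶠ k in atTop, t k < 1 ∧ (1 - t k) ^ k = t k) :
    Tendsto (fun k : ℕ => k * t k / log k) atTop (𝓝 1) := by
  have hlog := tendsto_natCast_log_atTop
  have hlower : Tendsto (fun k : ℕ => 1 - 2 * (log (log k) / log k)) atTop (𝓝 1) := by
    simpa using (isLittleO_log_id_atTop.tendsto_div_nhds_zero.comp hlog).const_mul 2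
      |>.const_sub 1
  have hsq : ∀ᶠ k : ℕ in atTop, log k ^ 2 ≤ k := by
    filter_upwards [tendsto_natCast_atTop_atTop.eventually
      ((isLittleO_pow_log_id_atTop (n := 2)).bound one_pos)] with k hk
    simpa [abs_of_nonneg (log_natCast_nonneg k)] using hk
  refine tendsto_of_tendsto_of_tendsto_of_le_of_le' hlower tendsto_const_nhds ?_ ?_
  · filter_upwards [ht, hsq, (tendsto_log_atTop.comp hlog).eventually_ge_atTop 1,
      hlog.eventually_gt_atTop 0] with k ⟨_, heq⟩ hk hL hL0
    calc 1 - 2 * (log (log k) / log k) = (log k - 2 * log (log k)) / log k := by field_simp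
      _ ≤ k * t k / log k :=
        div_le_div_of_nonneg_right (log_sub_two_log_log_le_mul_of_one_sub_pow_eq hL hk heq) hL0.le
  · filter_upwards [ht, hlog.eventually_ge_atTop 1] with k ⟨ht1, heq⟩ hk
    exact div_le_one_of_le₀ (mul_le_log_of_one_sub_pow_eq hk ht1 heq) (by linarith)

lemma tendsto_zero_of_tendsto_mul_div_log {f : ℕ → ℝ} {l : ℝ}
    (h : Tendsto (fun k : ℕ => k * f k / log k) atTop (𝓝 l)) : Tendsto f atTop (𝓝 0) := by
  have hdiv : Tendsto (fun k : ℕ => log k / k) atTop (𝓝 0) :=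
    isLittleO_log_id_atTop.tendsto_div_nhds_zero.comp tendsto_natCast_atTop_atTop
  refine (mul_zero l ▸ h.mul hdiv).congr' ?_
  filter_upwards [tendsto_natCast_log_atTop.eventually_gt_atTop 0, eventually_gt_atTop 0]
    with k hL hk
  field_simp

lemma pow_add_self_injOn (k : ℕ) : Set.InjOn (fun x : ℝ => x ^ k + x) (Set.Ici 0) :=
  (pow_left_monotoneOn.add_strictMono strictMonoOn_id).injOn

lemma inv_pow_add_inv_sub_one_eq_zero {k : ℕ} (hk : 1 ≤ k) {x : ℝ} (hx : x ≠ 0)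
    (h : x ^ k - x ^ (k - 1) - 1 = 0) : x⁻¹ ^ k + x⁻¹ - 1 = 0 := by
  obtain ⟨j, rfl⟩ := Nat.exists_eq_add_of_le' hk
  rw [Nat.add_sub_cancel, pow_succ] at h
  rw [inv_pow]
  field_simp
  linear_combination -x * h

/-- Asymptotics of the roots: if `a k` is the root of `X^k + X - 1` in `(0,1)`
and `b k` the positive root of `X^k - X^{k-1} - 1`, then
`β_k = 1 + ln k / k + o(ln k / k)` and `α_k = 1 - ln k / k + o(ln k / k)`,
i.e. `k (b k - 1) / ln k → 1` and `k (1 - a k) / ln k → 1`. -/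
theorem alpha_beta_asymptotics (a b : ℕ → ℝ)
    (ha : ∀ k : ℕ, 1 ≤ k → a k ∈ Set.Ioo (0 : ℝ) 1 ∧ a k ^ k + a k - 1 = 0)
    (hb : ∀ k : ℕ, 1 ≤ k → 0 < b k ∧ b k ^ k - b k ^ (k - 1) - 1 = 0) :
    Tendsto (fun k : ℕ => k * (b k - 1) / Real.log k) atTop (nhds 1) ∧
    Tendsto (fun k : ℕ => k * (1 - a k) / Real.log k) atTop (nhds 1) := by
  have hα : Tendsto (fun k : ℕ => k * (1 - a k) / log k) atTop (𝓝 1) := by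
    refine tendsto_mul_div_log_of_one_sub_pow_eq ?_
    filter_upwards [eventually_ge_atTop 1] with k hk
    obtain ⟨⟨ha0, -⟩, heq⟩ := ha k hk
    exact ⟨by linarith, by rw [sub_sub_cancel]; linarith⟩
  have ha_lim : Tendsto a atTop (𝓝 1) := by
    simpa using (tendsto_zero_of_tendsto_mul_div_log hα).const_sub 1
  have hab : ∀ k, 1 ≤ k → b k = (a k)⁻¹ := by
    intro k hk
    obtain ⟨⟨ha0, -⟩, haeq⟩ := ha k hk
    obtain ⟨hb0, hbeq⟩ := hb k hk
    rw [← inv_eq_iff_eq_inv]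
    refine pow_add_self_injOn k (inv_pos.2 hb0).le ha0.le ?_
    simp only
    linear_combination inv_pow_add_inv_sub_one_eq_zero hk hb0.ne' hbeq - haeq
  refine ⟨(div_one (1 : ℝ) ▸ hα.div ha_lim one_ne_zero).congr' ?_, hα⟩
  filter_upwards [eventually_ge_atTop 1] with k hk
  have ha0 := (ha k hk).1.1
  rw [Pi.div_apply, hab k hk]
  field_simp
end

section
/- For every integer k ≥ 1, every complex root z of the polynomial Q_k(X) = X^k − X^{k−1} − 1 with z ≠ β_k satisfies |z| < β_k; that is, β_k is the strictly dominant root of Q_k. -/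
/-!
Writing `k = m + 1`, the roots of `Q_k` are the solutions of `z ^ m * (z - 1) = 1`. Taking norms
and using `‖z‖ - 1 ≤ ‖z - 1‖` gives `f ‖z‖ ≤ 1 = f β` for `f r = r ^ m * (r - 1)`, which is
strictly increasing on `[1, ∞)`; so `‖z‖ ≥ β` forces `‖z‖ = β` and equality in the triangle
inequality, i.e. `z` lies on the ray through `1`, whence `z = β`.
-/

lemma one_lt_of_pow_mul_sub_one_eq_one {β : ℝ} (hβ : 0 < β) {m : ℕ}
    (h : β ^ m * (β - 1) = 1) : 1 < β := by
  by_contra! hle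
  have : β ^ m * (β - 1) ≤ 0 :=
    mul_nonpos_of_nonneg_of_nonpos (pow_pos hβ m).le (by linarith)
  linarith

lemma strictMonoOn_pow_mul_sub_one (m : ℕ) :
    StrictMonoOn (fun r : ℝ => r ^ m * (r - 1)) (Set.Ici 1) := by
  intro a (ha : 1 ≤ a) b _ hab
  calc a ^ m * (a - 1) ≤ b ^ m * (a - 1) := by gcongr
    _ < b ^ m * (b - 1) := by gcongr; exact pow_pos (by linarith) m

lemma Complex.eq_norm_of_norm_sub_one_eq {z : ℂ} (h : ‖z - 1‖ = ‖z‖ - 1) : z = ‖z‖ := by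
  have hz : 1 ≤ ‖z‖ := by linarith [norm_nonneg (z - 1)]
  have hray : SameRay ℝ z 1 := by
    rw [sameRay_iff_norm_sub, h, norm_one, abs_of_nonneg (by linarith)]
  simpa using (sameRay_iff_norm_smul_eq.mp hray).symm

theorem norm_lt_of_pow_mul_sub_one_eq_one {m : ℕ} {β : ℝ} (hβ : 0 < β)
    (hβroot : β ^ m * (β - 1) = 1) {z : ℂ} (hz : z ^ m * (z - 1) = 1) (hne : z ≠ β) :
    ‖z‖ < β := by
  have hβ1 := one_lt_of_pow_mul_sub_one_eq_one hβ hβroot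
  have hnorm : ‖z‖ ^ m * ‖z - 1‖ = 1 := by simpa using congrArg (‖·‖) hz
  by_contra! hle
  have hz1 : 1 ≤ ‖z‖ := by linarith
  have hle' : ‖z‖ ≤ β := by
    refine (strictMonoOn_pow_mul_sub_one m).le_iff_le hz1 hβ1.le |>.mp ?_
    calc ‖z‖ ^ m * (‖z‖ - 1) ≤ ‖z‖ ^ m * ‖z - 1‖ := by
          gcongr; simpa using norm_sub_norm_le z 1
      _ = β ^ m * (β - 1) := hnorm.trans hβroot.symm
  have hzβ : ‖z‖ = β := le_antisymm hle' hle
  have hsub : ‖z - 1‖ = ‖z‖ - 1 := by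
    rw [hzβ] at hnorm ⊢
    exact mul_left_cancel₀ (pow_pos hβ m).ne' (hnorm.trans hβroot.symm)
  exact hne (hzβ ▸ Complex.eq_norm_of_norm_sub_one_eq hsub)

theorem beta_dominant_root_general (k : ℕ) (β : ℝ) (hβ : 0 < β)
    (hβroot : β ^ k - β ^ (k - 1) - 1 = 0)
    (z : ℂ) (hz : z ^ k - z ^ (k - 1) - 1 = 0) (hne : z ≠ (β : ℂ)) :
    ‖z‖ < β := by
  cases k with
  | zero => simp at hβroot
  | succ m =>
    simp only [Nat.add_sub_cancel] at hβroot hz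
    exact norm_lt_of_pow_mul_sub_one_eq_one hβ (by linear_combination hβroot)
      (by linear_combination hz) hne

/-- `β_k`, the unique positive real root of `Q_k(X) = X^k - X^{k-1} - 1`, is
the strictly dominant root: any other complex root `z` satisfies `|z| < β_k`. -/
theorem beta_dominant_root (k : ℕ) (hk : 1 ≤ k) (β : ℝ) (hβ : 0 < β)
    (hβroot : β ^ k - β ^ (k - 1) - 1 = 0)
    (z : ℂ) (hz : z ^ k - z ^ (k - 1) - 1 = 0) (hne : z ≠ (β : ℂ)) :
    ‖z‖ < β :=
  beta_dominant_root_general k β hβ hβroot z hz hne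
end

section
/- Concerning the secondary complex roots of Q_k(X) = X^k − X^{k−1} − 1: (i) for k ∈ {2, 3, 4}, every complex root z of Q_k with z ≠ β_k satisfies |z| < 1; (ii) for k = 5, the maximum of |z| over roots z ≠ β_5 equals 1 (attained at e^{±iπ/3}); (iii) for every k ≥ 6, there exists a complex root z of Q_k with z ≠ β_k and |z| > 1. -/
/-!
For `k ≤ 5` the secondary roots are read off explicit real factorizations,
`Q₂ = (X - β)(X + β - 1)`, `Q₃ = (X - β)(X² + (β - 1)X + β² - β)`, `Q₄ = (X - β)(X - r)(X² + (β + r - 1)X + c)` with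
`r ∈ (-1, -1/β)` the negative root of `Q₄` and `βrc = -1`, and
`Q₅ = (X² - X + 1)(X - β)(X² + βX + β² - 1)`: a root of `X² + pX + q` with `p² < 4q` has
`|z|² = q`, and here `q < 1` except for the factor `X² - X + 1` of `Q₅`.

For `k = m + 1 ≥ 6`, look for a root `z = ρ e^{-iθ}`. Since
`sin (m+1)θ · e^{iθ} - sin mθ = e^{i(m+1)θ} sin θ`, the choice `ρ = sin mθ / sin (m+1)θ` turns
`Q_k(z) = 0` into the single real equation `sin θ · (-sin mθ)^m = (-sin (m+1)θ)^(m+1)`, which the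
intermediate value theorem solves on `(π/m, 2π/(m+2))`. There `sin θ < -sin (m+1)θ`, which
forces `-sin mθ > -sin (m+1)θ`, i.e. `ρ > 1`.
-/

open Real

lemma Real.sin_lt_sin_of_lt_of_add_lt_pi {x y : ℝ} (hx : -(π / 2) ≤ x) (hxy : x < y)
    (hsum : x + y < π) : sin x < sin y := by
  rcases le_or_gt y (π / 2) with hy | hy
  · exact sin_lt_sin_of_lt_of_le_pi_div_two hx hy hxy
  · rw [← sin_pi_sub y]
    exact sin_lt_sin_of_lt_of_le_pi_div_two hx (by linarith) (by linarith)

lemma one_lt_of_pow_succ_sub_pow_sub_one_eq_zero {x : ℝ} {n : ℕ} (hx : 0 < x)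
    (h : x ^ (n + 1) - x ^ n - 1 = 0) : 1 < x := by
  have hxn : x ^ n * (x - 1) = 1 := by linear_combination h
  nlinarith [pow_pos hx n]

lemma lt_two_of_pow_succ_sub_pow_sub_one_eq_zero {x : ℝ} {n : ℕ} (hn : n ≠ 0) (hx : 0 < x)
    (h : x ^ (n + 1) - x ^ n - 1 = 0) : x < 2 := by
  have hxn : x ^ n * (x - 1) = 1 := by linear_combination h
  have := one_lt_pow₀ (one_lt_of_pow_succ_sub_pow_sub_one_eq_zero hx h) hn
  nlinarith

lemma norm_sq_eq_of_quadratic_eq_zero {p q : ℝ} (hdisc : p ^ 2 < 4 * q) {z : ℂ}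
    (hz : z ^ 2 + p * z + q = 0) : ‖z‖ ^ 2 = q := by
  have hre := congrArg Complex.re hz
  have him := congrArg Complex.im hz
  simp only [pow_two, Complex.add_re, Complex.mul_re, Complex.ofReal_re, Complex.ofReal_im,
    Complex.add_im, Complex.mul_im, Complex.zero_re, Complex.zero_im] at hre him
  have hy : z.im ≠ 0 := by
    intro hy
    rw [hy] at hre
    nlinarith [sq_nonneg (2 * z.re + p)]
  have hx : 2 * z.re + p = 0 := by
    refine (mul_eq_zero.mp ?_).resolve_left hy
    linear_combination him
  obtain rfl : p = -2 * z.re := by linarith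
  rw [Complex.sq_norm, Complex.normSq_apply]
  linarith

lemma norm_lt_one_of_quadratic_eq_zero {p q : ℝ} (hdisc : p ^ 2 < 4 * q) (hq : q < 1) {z : ℂ}
    (hz : z ^ 2 + p * z + q = 0) : ‖z‖ < 1 :=
  (pow_lt_one_iff_of_nonneg (norm_nonneg z) two_ne_zero).mp
    (norm_sq_eq_of_quadratic_eq_zero hdisc hz ▸ hq)

lemma norm_lt_one_of_root_k2 {β : ℝ} (hβ0 : 0 < β) (hβ : β ^ 2 - β - 1 = 0) {z : ℂ}
    (hz : z ^ 2 - z - 1 = 0) (hzβ : z ≠ β) : ‖z‖ < 1 := by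
  have hβ1 := one_lt_of_pow_succ_sub_pow_sub_one_eq_zero (n := 1) hβ0 (by linear_combination hβ)
  have hβ2 := lt_two_of_pow_succ_sub_pow_sub_one_eq_zero (n := 1) one_ne_zero hβ0
    (by linear_combination hβ)
  have hβc : (β : ℂ) ^ 2 - β - 1 = 0 := by exact_mod_cast hβ
  have hz' : z = (1 - β : ℝ) := by
    have : (z - β) * (z - (1 - β)) = 0 := by linear_combination hz - hβc
    push_cast
    exact sub_eq_zero.mp ((mul_eq_zero.mp this).resolve_left (sub_ne_zero.mpr hzβ))
  rw [hz', Complex.norm_real, Real.norm_of_nonpos (by linarith)]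
  linarith

lemma norm_lt_one_of_root_k3 {β : ℝ} (hβ0 : 0 < β) (hβ : β ^ 3 - β ^ 2 - 1 = 0) {z : ℂ}
    (hz : z ^ 3 - z ^ 2 - 1 = 0) (hzβ : z ≠ β) : ‖z‖ < 1 := by
  have hβ1 := one_lt_of_pow_succ_sub_pow_sub_one_eq_zero hβ0 hβ
  have hβc : (β : ℂ) ^ 3 - β ^ 2 - 1 = 0 := by exact_mod_cast hβ
  have hq : z ^ 2 + (β - 1 : ℝ) * z + (β ^ 2 - β : ℝ) = 0 := by
    have : (z - β) * (z ^ 2 + (β - 1) * z + (β ^ 2 - β)) = 0 := by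
      linear_combination hz - hβc
    push_cast
    exact (mul_eq_zero.mp this).resolve_left (sub_ne_zero.mpr hzβ)
  exact norm_lt_one_of_quadratic_eq_zero (by nlinarith) (by nlinarith) hq

lemma exists_root_k4_mem_Ioo {β : ℝ} (hβ1 : 1 < β) (hβ : β ^ 4 - β ^ 3 - 1 = 0) :
    ∃ r ∈ Set.Ioo (-1) (-β⁻¹), r ^ 4 - r ^ 3 - 1 = 0 := by
  have hβ0 : 0 < β := by linarith
  have hlt : -1 < -β⁻¹ := neg_lt_neg (inv_lt_one_of_one_lt₀ hβ1)
  have hneg : (-β⁻¹) ^ 4 - (-β⁻¹) ^ 3 - 1 < 0 := by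
    have : (-β⁻¹) ^ 4 - (-β⁻¹) ^ 3 - 1 = (β - β ^ 3) / β ^ 4 := by
      field_simp
      linear_combination -hβ
    rw [this]
    exact div_neg_of_neg_of_pos (by nlinarith [mul_pos hβ0 (show 0 < β ^ 2 - 1 by nlinarith)])
      (by positivity)
  obtain ⟨r, hr, hr0⟩ := intermediate_value_Ioo' hlt.le
    (by fun_prop : Continuous fun x : ℝ ↦ x ^ 4 - x ^ 3 - 1).continuousOn
    ⟨hneg, by norm_num⟩
  exact ⟨r, hr, hr0⟩

lemma norm_lt_one_of_root_k4 {β : ℝ} (hβ0 : 0 < β) (hβ : β ^ 4 - β ^ 3 - 1 = 0) {z : ℂ}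
    (hz : z ^ 4 - z ^ 3 - 1 = 0) (hzβ : z ≠ β) : ‖z‖ < 1 := by
  have hβ1 := one_lt_of_pow_succ_sub_pow_sub_one_eq_zero hβ0 hβ
  have hβ2 := lt_two_of_pow_succ_sub_pow_sub_one_eq_zero three_ne_zero hβ0 hβ
  obtain ⟨r, ⟨hr1, hr2⟩, hr⟩ := exists_root_k4_mem_Ioo hβ1 hβ
  have hr0 : r < 0 := hr2.trans (neg_neg_of_pos (inv_pos.mpr hβ0))
  have hβr : 1 < β * -r := by
    have := mul_lt_mul_of_pos_left (lt_neg_of_lt_neg hr2) hβ0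
    rwa [mul_inv_cancel₀ hβ0.ne'] at this
  set c := β ^ 2 + β * r + r ^ 2 - β - r with hc_def
  have hS : β ^ 3 + β ^ 2 * r + β * r ^ 2 + r ^ 3 - (β ^ 2 + β * r + r ^ 2) = 0 := by
    refine (mul_eq_zero.mp (?_ : (β - r) * _ = 0)).resolve_left (by linarith)
    linear_combination hβ - hr
  have hc : β * r * c = -1 := by linear_combination β * hS - hβ
  have hβc : (β : ℂ) ^ 4 - β ^ 3 - 1 = 0 := by exact_mod_cast hβ
  have hSc : (β : ℂ) ^ 3 + β ^ 2 * r + β * r ^ 2 + r ^ 3 - (β ^ 2 + β * r + r ^ 2) = 0 := by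
    exact_mod_cast hS
  have hfac : (z - β) * ((z - r) * (z ^ 2 + (β + r - 1 : ℝ) * z + (c : ℝ))) = 0 := by
    rw [hc_def]
    push_cast
    linear_combination hz - hβc + (β - z) * hSc
  rcases mul_eq_zero.mp ((mul_eq_zero.mp hfac).resolve_left (sub_ne_zero.mpr hzβ)) with h | h
  · rw [sub_eq_zero.mp h, Complex.norm_real, Real.norm_of_nonpos hr0.le]
    linarith
  · exact norm_lt_one_of_quadratic_eq_zero (by nlinarith) (by nlinarith) h

lemma norm_le_one_of_root_k5 {β : ℝ} (hβ0 : 0 < β) (hβ : β ^ 5 - β ^ 4 - 1 = 0) {z : ℂ}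
    (hz : z ^ 5 - z ^ 4 - 1 = 0) (hzβ : z ≠ β) : ‖z‖ ≤ 1 := by
  have hβ1 := one_lt_of_pow_succ_sub_pow_sub_one_eq_zero hβ0 hβ
  have hβ3 : β ^ 3 - β - 1 = 0 := by
    have : (β ^ 2 - β + 1) * (β ^ 3 - β - 1) = 0 := by linear_combination hβ
    exact (mul_eq_zero.mp this).resolve_left (by nlinarith)
  have hβc : (β : ℂ) ^ 3 - β - 1 = 0 := by exact_mod_cast hβ3
  have hfac : (z ^ 2 + (-1 : ℝ) * z + (1 : ℝ)) *
      ((z - β) * (z ^ 2 + (β : ℝ) * z + (β ^ 2 - 1 : ℝ))) = 0 := by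
    push_cast
    linear_combination hz - (z ^ 2 - z + 1) * hβc
  rcases mul_eq_zero.mp hfac with h | h
  · exact (pow_le_one_iff_of_nonneg (norm_nonneg z) two_ne_zero).mp
      (norm_sq_eq_of_quadratic_eq_zero (by norm_num) h).le
  · exact (norm_lt_one_of_quadratic_eq_zero (by nlinarith) (by nlinarith)
      ((mul_eq_zero.mp h).resolve_left (sub_ne_zero.mpr hzβ))).le

lemma Complex.exp_pi_div_three_mul_I_im_pos : 0 < (Complex.exp (π / 3 * Complex.I)).im := by
  rw [show (π / 3 : ℂ) = (π / 3 : ℝ) by push_cast; rfl, Complex.exp_ofReal_mul_I_im]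
  exact sin_pos_of_pos_of_lt_pi (by positivity) (by linarith [pi_pos])

lemma Complex.exp_pi_div_three_mul_I_sq_sub_add_one :
    Complex.exp (π / 3 * Complex.I) ^ 2 - Complex.exp (π / 3 * Complex.I) + 1 = 0 := by
  set E := Complex.exp (π / 3 * Complex.I)
  have hE3 : E ^ 3 = -1 := by
    rw [← Complex.exp_nat_mul, ← Complex.exp_pi_mul_I]
    push_cast
    ring_nf
  have hE1 : E + 1 ≠ 0 := by
    intro h
    have : 0 < E.im := Complex.exp_pi_div_three_mul_I_im_pos
    rw [eq_neg_of_add_eq_zero_left h] at this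
    simp at this
  refine (mul_eq_zero.mp ?_).resolve_left hE1
  linear_combination hE3

lemma Complex.sin_add_mul_exp_sub_sin (x y : ℂ) :
    Complex.sin (x + y) * Complex.exp (y * Complex.I) - Complex.sin x
      = Complex.exp ((x + y) * Complex.I) * Complex.sin y := by
  simp only [Complex.sin, add_mul, neg_add, Complex.exp_add, neg_mul, Complex.exp_neg]
  field_simp
  ring

lemma div_mul_inv_pow_succ_sub_pow_sub_one_eq_zero {K : Type*} [Field K] {a b e s : K} {m : ℕ}
    (hb : b ≠ 0) (he : e ≠ 0) (hab : a - b * e = e ^ (m + 1) * s)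
    (hs : s * a ^ m = b ^ (m + 1)) :
    (a / b * e⁻¹) ^ (m + 1) - (a / b * e⁻¹) ^ m - 1 = 0 := by
  have ha : a = a / b * e⁻¹ * (b * e) := by field_simp
  generalize a / b * e⁻¹ = z at ha ⊢
  subst ha
  have key : (b * e) ^ (m + 1) * (z ^ (m + 1) - z ^ m - 1) = 0 := by
    linear_combination (z * (b * e)) ^ m * hab + e ^ (m + 1) * hs
  exact (mul_eq_zero.mp key).resolve_left (pow_ne_zero _ (mul_ne_zero hb he))

lemma exists_mem_Ioo_sin_mul_neg_sin_pow_eq (m : ℕ) (hm : 5 ≤ m) :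
    ∃ θ ∈ Set.Ioo (π / m) (2 * π / (m + 2)),
      sin θ * (-sin (m * θ)) ^ m = (-sin ((m + 1) * θ)) ^ (m + 1) := by
  have hm5 : (5 : ℝ) ≤ m := by exact_mod_cast hm
  have hπ := pi_pos
  set a := π / m with ha_def
  set c := 2 * π / (m + 2) with hc_def
  have hac : a < c := by
    rw [div_lt_div_iff₀ (by linarith) (by linarith)]
    nlinarith
  have hma : (m : ℝ) * a = π := by rw [ha_def]; field_simp
  have hmc : (m : ℝ) * c = 2 * π - 2 * c := by rw [hc_def]; field_simp; ring
  have ha_pos : 0 < sin a :=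
    sin_pos_of_pos_of_lt_pi (by positivity) (by rw [div_lt_iff₀ (by linarith)]; nlinarith)
  have hc_pos : 0 < c := by positivity
  have h3c : 3 * c < π := by
    rw [hc_def, mul_div_assoc', div_lt_iff₀ (by linarith)]
    nlinarith
  set H : ℝ → ℝ := fun θ ↦ sin θ * (-sin (m * θ)) ^ m - (-sin ((m + 1) * θ)) ^ (m + 1)
  have hHa : H a < 0 := by
    simp only [H, add_mul, hma, one_mul, sin_pi, neg_zero, zero_pow (by omega : m ≠ 0),
      mul_zero, add_comm π, sin_add_pi, neg_neg, zero_sub, neg_neg_iff_pos]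
    positivity
  have hHc : 0 < H c := by
    have hsc : 0 < sin c := sin_pos_of_pos_of_lt_pi hc_pos (by linarith)
    have hs2c : sin c < sin (2 * c) :=
      sin_lt_sin_of_lt_of_add_lt_pi (by linarith) (by linarith) (by linarith)
    have : sin c ^ m < sin (2 * c) ^ m := pow_lt_pow_left₀ hs2c hsc.le (by omega)
    simp only [H, add_mul, hmc, one_mul, show 2 * π - 2 * c + c = 2 * π - c by ring,
      sin_two_pi_sub, neg_neg, pow_succ]
    nlinarith
  obtain ⟨θ, hθ, hHθ⟩ :=
    intermediate_value_Ioo hac.le (by fun_prop : Continuous H).continuousOn ⟨hHa, hHc⟩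
  exact ⟨θ, hθ, sub_eq_zero.mp hHθ⟩

theorem exists_nonreal_root_one_lt_norm (m : ℕ) (hm : 5 ≤ m) :
    ∃ z : ℂ, z ^ (m + 1) - z ^ m - 1 = 0 ∧ z.im ≠ 0 ∧ 1 < ‖z‖ := by
  obtain ⟨θ, ⟨hθl, hθr⟩, hθ⟩ := exists_mem_Ioo_sin_mul_neg_sin_pow_eq m hm
  have hm0 : (0 : ℝ) < m := by positivity
  have hθ0 : 0 < θ := lt_trans (by positivity) hθl
  have hmθ : π < m * θ := by rwa [div_lt_iff₀' hm0] at hθl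
  have hm2θ : (m + 2) * θ < 2 * π := by rwa [lt_div_iff₀' (by positivity)] at hθr
  have hsθ : 0 < sin θ := sin_pos_of_pos_of_lt_pi hθ0 (by nlinarith)
  set A := -sin (m * θ) with hA_def
  set B := -sin ((m + 1) * θ) with hB_def
  have hA : 0 < A := by
    rw [hA_def, ← sin_sub_pi]
    exact sin_pos_of_pos_of_lt_pi (by linarith) (by nlinarith)
  have hsB : sin θ < B := by
    rw [hB_def, ← sin_two_pi_sub]
    exact sin_lt_sin_of_lt_of_add_lt_pi (by linarith) (by linarith) (by linarith)
  have hB : 0 < B := hsθ.trans hsB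
  have hBA : B < A := by
    by_contra! hAB
    have : B ^ (m + 1) ≤ sin θ * B ^ m :=
      hθ ▸ mul_le_mul_of_nonneg_left (pow_le_pow_left₀ hA.le hAB m) hsθ.le
    rw [pow_succ'] at this
    nlinarith [pow_pos hB m]
  refine ⟨((A / B : ℝ) : ℂ) * Complex.exp (↑(-θ) * Complex.I), ?_, ?_, ?_⟩
  · have he : Complex.exp (↑(-θ) * Complex.I) = (Complex.exp (θ * Complex.I))⁻¹ := by
      rw [← Complex.exp_neg]; push_cast; ring_nf
    rw [he, Complex.ofReal_div]
    refine div_mul_inv_pow_succ_sub_pow_sub_one_eq_zero (s := sin θ)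
      (e := Complex.exp (θ * Complex.I)) (Complex.ofReal_ne_zero.mpr hB.ne')
      (Complex.exp_ne_zero _) ?_ (by exact_mod_cast hθ)
    have key := Complex.sin_add_mul_exp_sub_sin (m * θ) θ
    rw [show (m * θ + θ : ℂ) = (m + 1) * θ by ring] at key
    rw [← Complex.exp_nat_mul, ← mul_assoc]
    simp only [hA_def, hB_def, Complex.ofReal_neg, Complex.ofReal_sin, Complex.ofReal_mul,
      Complex.ofReal_add, Complex.ofReal_natCast, Complex.ofReal_one, Nat.cast_succ]
    linear_combination key
  · rw [Complex.im_ofReal_mul, Complex.exp_ofReal_mul_I_im, sin_neg]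
    exact mul_ne_zero (div_pos hA hB).ne' (neg_ne_zero.mpr hsθ.ne')
  · rw [norm_mul, Complex.norm_real, Complex.norm_exp_ofReal_mul_I, mul_one,
      Real.norm_of_nonneg (div_pos hA hB).le, one_lt_div hB]
    exact hBA

/-- Secondary roots of `Q_k(X) = X^k - X^{k-1} - 1` (with `β_k` its unique
positive real root): (i) for `k ∈ {2,3,4}` all roots `≠ β_k` have modulus `< 1`;
(ii) for `k = 5` the maximal modulus of the roots `≠ β_5` is exactly `1`,
attained at `e^{iπ/3}`; (iii) for `k ≥ 6` some root `≠ β_k` has modulus `> 1`. -/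
theorem secondary_roots_modulus :
    (∀ k ∈ ({2, 3, 4} : Set ℕ), ∀ β : ℝ, 0 < β → β ^ k - β ^ (k - 1) - 1 = 0 →
      ∀ z : ℂ, z ^ k - z ^ (k - 1) - 1 = 0 → z ≠ (β : ℂ) → ‖z‖ < 1) ∧
    (∀ β : ℝ, 0 < β → β ^ 5 - β ^ 4 - 1 = 0 →
      (∀ z : ℂ, z ^ 5 - z ^ 4 - 1 = 0 → z ≠ (β : ℂ) → ‖z‖ ≤ 1) ∧
      (Complex.exp (Real.pi / 3 * Complex.I) ^ 5
        - Complex.exp (Real.pi / 3 * Complex.I) ^ 4 - 1 = 0 ∧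
       Complex.exp (Real.pi / 3 * Complex.I) ≠ (β : ℂ) ∧
       ‖Complex.exp (Real.pi / 3 * Complex.I)‖ = 1)) ∧
    (∀ k : ℕ, 6 ≤ k → ∀ β : ℝ, 0 < β → β ^ k - β ^ (k - 1) - 1 = 0 →
      ∃ z : ℂ, z ^ k - z ^ (k - 1) - 1 = 0 ∧ z ≠ (β : ℂ) ∧ 1 < ‖z‖) := by
  have ne_ofReal {z : ℂ} (hz : z.im ≠ 0) (β : ℝ) : z ≠ β :=
    fun h ↦ hz (by rw [h, Complex.ofReal_im])
  refine ⟨?_, fun β hβ0 hβ ↦ ⟨fun z ↦ norm_le_one_of_root_k5 hβ0 hβ, ?_, ?_, ?_⟩, ?_⟩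
  · intro k hk β hβ0 hβ z hz hzβ
    rcases hk with rfl | rfl | rfl
    · norm_num at hβ hz
      exact norm_lt_one_of_root_k2 hβ0 hβ hz hzβ
    · exact norm_lt_one_of_root_k3 hβ0 hβ hz hzβ
    · exact norm_lt_one_of_root_k4 hβ0 hβ hz hzβ
  · set E := Complex.exp (π / 3 * Complex.I)
    linear_combination (E ^ 3 - E - 1) * Complex.exp_pi_div_three_mul_I_sq_sub_add_one
  · exact ne_ofReal Complex.exp_pi_div_three_mul_I_im_pos.ne' β
  · simp [Complex.norm_exp]
  · intro k hk β _ _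
    obtain ⟨z, hz, him, hnorm⟩ := exists_nonreal_root_one_lt_norm (k - 1) (by omega)
    rw [Nat.sub_add_cancel (by omega)] at hz
    exact ⟨z, hz, ne_ofReal him β, hnorm⟩
end

section
/- For every integer k ≥ 1, the polynomial Q_k(X) = X^k − X^{k−1} − 1 has k distinct complex roots, and for every n ≥ 0 one has A_{k,n} = Σ_r c(r)·r^n, where the sum ranges over the k complex roots r of Q_k and c(r) = r^k / (k·r − (k−1)); moreover each coefficient c(r) is nonzero. -/
open Polynomial

/-- The polynomial `Q_k(X) = X^k - X^{k-1} - 1` over `ℂ`. -/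
noncomputable def Q (k : ℕ) : Polynomial ℂ := X ^ k - X ^ (k - 1) - 1

/-!
The roots of `Q_k` are simple: a common root of `Q_k` and of
`X Q_k' = X^(k-1) (k X - (k - 1))` would be `(k - 1) / k ∈ [0, 1]`, where `Q_k < 0`.
For a monic polynomial with simple roots, Lagrange interpolation reads the coefficient of
`X^(k-1)` of any `f` of degree `< k` as `∑_r f(r) / Q_k'(r)`. Hence `S m = ∑_r r^m / Q_k'(r)`
is `1` at `m = k - 1` and `0` for the other `m < k`, and, since `r^k = r^(k-1) + 1`, it satisfies
the recurrence of `A k`; this forces `A k n = S (n + 2k - 2)`. Finally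
`r^(n+2k-2) / Q_k'(r) = c(r) r^n` because `r Q_k'(r) = r^(k-1) (k r - (k - 1))`.
-/

theorem Polynomial.Splits.coeff_natDegree_pred_eq_sum_div_derivative {F : Type*} [Field F]
    [DecidableEq F] {p f : F[X]} (hsplit : p.Splits) (hmonic : p.Monic) (hnodup : p.roots.Nodup)
    (hf : f.degree < p.degree) :
    f.coeff (p.natDegree - 1) = ∑ r ∈ p.roots.toFinset, f.eval r / (derivative p).eval r := by
  have hcard : p.roots.toFinset.card = p.natDegree := by
    rw [Multiset.toFinset_card_of_nodup hnodup, hsplit.natDegree_eq_card_roots]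
  rw [← hcard, Lagrange.coeff_eq_sum (v := id) Function.injective_id.injOn
    (by rwa [hcard, ← degree_eq_natDegree hmonic.ne_zero])]
  refine Finset.sum_congr rfl fun r hr => ?_
  rw [hsplit.eval_root_derivative hmonic (Multiset.mem_toFinset.mp hr),
    Finset.prod_eq_multiset_prod, Finset.erase_val, Multiset.toFinset_val, hnodup.dedup]
  rfl

lemma eval_Q (k : ℕ) (z : ℂ) : (Q k).eval z = z ^ k - z ^ (k - 1) - 1 := by
  simp [Q]

lemma natDegree_Q {k : ℕ} (hk : 1 ≤ k) : (Q k).natDegree = k := by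
  unfold Q
  compute_degree!
  simp [show k ≠ k - 1 by omega, show k ≠ 0 by omega]

lemma Q_monic {k : ℕ} (hk : 1 ≤ k) : (Q k).Monic := by
  rw [Monic, leadingCoeff, natDegree_Q hk]
  simp [Q, coeff_one, show k ≠ k - 1 by omega, show k ≠ 0 by omega]

lemma eval_derivative_Q_mul_self {k : ℕ} (hk : 1 ≤ k) (r : ℂ) :
    (derivative (Q k)).eval r * r = r ^ (k - 1) * (k * r - (k - 1)) := by
  obtain ⟨j, rfl⟩ : ∃ j, k = j + 1 := ⟨k - 1, by omega⟩
  cases j with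
  | zero => simp [Q]
  | succ j =>
    simp only [Q, add_tsub_cancel_right, derivative_sub, derivative_X_pow_succ, Nat.cast_add,
      Nat.cast_one, map_add, map_natCast, map_one, derivative_one, sub_zero, eval_sub, eval_mul,
      eval_add, eval_natCast, eval_one, eval_pow, eval_X, add_sub_cancel_right]
    ring

lemma eval_ofReal_Q_ne_zero (k : ℕ) {t : ℝ} (h0 : 0 ≤ t) (h1 : t ≤ 1) : (Q k).eval (t : ℂ) ≠ 0 := by
  have hpow : t ^ k ≤ t ^ (k - 1) := pow_le_pow_of_le_one h0 h1 (Nat.sub_le k 1)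
  rw [eval_Q]
  exact_mod_cast (by linarith : t ^ k - t ^ (k - 1) - 1 ≠ 0)

section RootsOfQ

variable {k : ℕ} {r : ℂ}

lemma ne_zero_of_isRoot_Q (hr : (Q k).IsRoot r) : r ≠ 0 := by
  rintro rfl
  exact eval_ofReal_Q_ne_zero k le_rfl zero_le_one (by simpa using hr)

lemma mul_sub_ne_zero_of_isRoot_Q (hr : (Q k).IsRoot r) : (k : ℂ) * r - (k - 1) ≠ 0 := by
  intro h
  rcases Nat.eq_zero_or_pos k with rfl | hk
  · simp at h
  have hk' : (1 : ℝ) ≤ k := by exact_mod_cast hk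
  have hr' : r = (((k - 1) / k : ℝ) : ℂ) := by
    have : (k : ℂ) ≠ 0 := by exact_mod_cast hk.ne'
    push_cast
    field_simp
    linear_combination h
  refine eval_ofReal_Q_ne_zero k (t := (k - 1) / k) (by positivity) ?_ (hr' ▸ hr)
  exact (div_le_one (by positivity)).mpr (by linarith)

lemma pow_eq_pow_pred_add_one_of_isRoot_Q (hr : (Q k).IsRoot r) : r ^ k = r ^ (k - 1) + 1 := by
  linear_combination (eval_Q k r ▸ hr : r ^ k - r ^ (k - 1) - 1 = 0)

end RootsOfQ

lemma Q_roots_nodup {k : ℕ} (hk : 1 ≤ k) : (Q k).roots.Nodup := by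
  refine Multiset.nodup_iff_count_le_one.mpr fun r => ?_
  rw [count_roots, ← not_lt, one_lt_rootMultiplicity_iff_isRoot (Q_monic hk).ne_zero]
  rintro ⟨hr, hr'⟩
  have := eval_derivative_Q_mul_self hk r
  rw [hr'.eq_zero, zero_mul] at this
  exact mul_ne_zero (pow_ne_zero _ (ne_zero_of_isRoot_Q hr)) (mul_sub_ne_zero_of_isRoot_Q hr)
    this.symm

lemma A_of_lt_s11 {k n : ℕ} (hn : n < k) : A k n = n + 1 := by
  cases n with
  | zero => rw [A]
  | succ p => rw [A, if_pos hn]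

lemma A_of_le {k n : ℕ} (hk : 1 ≤ k) (hn : k ≤ n) : A k n = A k (n - 1) + A k (n - k) := by
  obtain ⟨p, rfl⟩ : ∃ p, n = p + 1 := ⟨n - 1, by omega⟩
  rw [A, if_neg (by omega), max_eq_left hk, Nat.add_sub_cancel]

section Recurrence

variable {R : Type*} [AddMonoidWithOne R] {k : ℕ} {u : ℕ → R}
  (hinit : ∀ m < k, u m = if k - 1 = m then 1 else 0)
  (hrec : ∀ m, u (m + k) = u (m + k - 1) + u m)
include hinit hrec

lemma apply_pred_add_eq_one_of_rec {j : ℕ} (hj : j < k) : u (k - 1 + j) = 1 := by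
  induction j with
  | zero => rw [add_zero, hinit _ (by omega), if_pos rfl]
  | succ j ih =>
    rw [show k - 1 + (j + 1) = j + k by omega, hrec, show j + k - 1 = k - 1 + j by omega,
      ih (by omega), hinit _ (by omega), if_neg (by omega), add_zero]

lemma apply_add_two_mul_sub_two_of_rec {n : ℕ} (hn : n < k) : u (n + (2 * k - 2)) = n + 1 := by
  induction n with
  | zero =>
    rw [zero_add, show 2 * k - 2 = k - 1 + (k - 1) by omega,
      apply_pred_add_eq_one_of_rec hinit hrec (by omega), Nat.cast_zero, zero_add]
  | succ n ih =>
    rw [show n + 1 + (2 * k - 2) = (n + k - 1) + k by omega, hrec,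
      show n + k - 1 + k - 1 = n + (2 * k - 2) by omega, ih (by omega),
      show n + k - 1 = k - 1 + n by omega, apply_pred_add_eq_one_of_rec hinit hrec (by omega),
      Nat.cast_succ]

lemma cast_A_eq_of_rec (hk : 1 ≤ k) (n : ℕ) : (A k n : R) = u (n + (2 * k - 2)) := by
  induction n using Nat.strong_induction_on with
  | _ n ih =>
    rcases lt_or_ge n k with hn | hn
    · rw [A_of_lt_s11 hn, apply_add_two_mul_sub_two_of_rec hinit hrec hn, Nat.cast_succ]
    · rw [A_of_le hk hn, Nat.cast_add, ih (n - 1) (by omega), ih (n - k) (by omega),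
        show n + (2 * k - 2) = (n - k) + (2 * k - 2) + k by omega, hrec,
        show n - k + (2 * k - 2) + k - 1 = (n - 1) + (2 * k - 2) by omega]

end Recurrence

noncomputable def rootPowerSum (k m : ℕ) : ℂ :=
  ∑ r ∈ (Q k).roots.toFinset, r ^ m / (derivative (Q k)).eval r

lemma rootPowerSum_of_lt {k m : ℕ} (hk : 1 ≤ k) (hm : m < k) :
    rootPowerSum k m = if k - 1 = m then 1 else 0 := by
  have hdeg : (X ^ m : ℂ[X]).degree < (Q k).degree := by
    rw [degree_X_pow, degree_eq_natDegree (Q_monic hk).ne_zero, natDegree_Q hk]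
    exact_mod_cast hm
  have h := (IsAlgClosed.splits (Q k)).coeff_natDegree_pred_eq_sum_div_derivative
    (Q_monic hk) (Q_roots_nodup hk) hdeg
  simp only [natDegree_Q hk, coeff_X_pow, eval_pow, eval_X] at h
  rw [rootPowerSum, ← h]

lemma rootPowerSum_add {k : ℕ} (hk : 1 ≤ k) (m : ℕ) :
    rootPowerSum k (m + k) = rootPowerSum k (m + k - 1) + rootPowerSum k m := by
  simp only [rootPowerSum, ← Finset.sum_add_distrib, ← add_div]
  refine Finset.sum_congr rfl fun r hr => ?_
  have hr := isRoot_of_mem_roots (Multiset.mem_toFinset.mp hr)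
  rw [show m + k - 1 = m + (k - 1) by omega, pow_add, pow_add,
    pow_eq_pow_pred_add_one_of_isRoot_Q hr, mul_add, mul_one]

/-- `Q_k` has `k` distinct complex roots, the coefficients
`c(r) = r^k / (k·r - (k-1))` are all nonzero, and
`A_{k,n} = Σ_r c(r)·r^n` over the roots `r` of `Q_k`. -/
theorem A_eq_sum_root_powers (k : ℕ) (hk : 1 ≤ k) :
    (Q k).roots.toFinset.card = k ∧
    (∀ r ∈ (Q k).roots.toFinset, r ^ k / ((k : ℂ) * r - ((k : ℂ) - 1)) ≠ 0) ∧
    (∀ n : ℕ, (A k n : ℂ) =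
      ∑ r ∈ (Q k).roots.toFinset, r ^ k / ((k : ℂ) * r - ((k : ℂ) - 1)) * r ^ n) := by
  refine ⟨?_, fun r hr => ?_, fun n => ?_⟩
  · rw [Multiset.toFinset_card_of_nodup (Q_roots_nodup hk), IsAlgClosed.card_roots_eq_natDegree,
      natDegree_Q hk]
  · have hr := isRoot_of_mem_roots (Multiset.mem_toFinset.mp hr)
    exact div_ne_zero (pow_ne_zero _ (ne_zero_of_isRoot_Q hr)) (mul_sub_ne_zero_of_isRoot_Q hr)
  rw [cast_A_eq_of_rec (fun m => rootPowerSum_of_lt hk) (rootPowerSum_add hk) hk, rootPowerSum]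
  refine Finset.sum_congr rfl fun r hr => ?_
  have hr := isRoot_of_mem_roots (Multiset.mem_toFinset.mp hr)
  have hr0 := ne_zero_of_isRoot_Q hr
  have hd := mul_sub_ne_zero_of_isRoot_Q hr
  rw [eq_div_of_mul_eq hr0 (eval_derivative_Q_mul_self hk r)]
  obtain ⟨j, rfl⟩ : ∃ j, k = j + 1 := ⟨k - 1, by omega⟩
  rw [show n + (2 * (j + 1) - 2) = n + 2 * j by omega, Nat.add_sub_cancel]
  field_simp
  ring
end

section
/- Let θ, ρ ∈ ℝ with sin θ ≠ 0, and define a_n = cos(nθ + ρ) for n ∈ ℕ. Then there exists a strictly increasing sequence of natural numbers (n_j) with a_{n_j} ≥ 1/2 for all j, and likewise there exists a strictly increasing sequence of natural numbers (m_j) with a_{m_j} ≤ −1/2 for all j. -/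
/-!
By Dirichlet's approximation theorem, `jθ` lies within `2π/3` of a multiple of `2π` for `j = 1`
or `j = 2`, and it is not itself a multiple of `2π` since `sin θ ≠ 0`. Along the indices
`N, N + j, N + 2j, …` the angle `nθ + ρ` therefore moves around the circle by a nonzero step of
length at most `2π/3`, so it cannot jump over the arc `|t| ≤ π/3` on which `cos t ≥ 1/2`.
The case `≤ -1/2` is the case `≥ 1/2` with `ρ` replaced by `ρ + π`.
-/

open Real Filter

lemma one_half_le_cos_of_abs_le {t : ℝ} (h : |t| ≤ π / 3) : 1 / 2 ≤ cos t := by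
  rw [← cos_abs, ← cos_pi_div_three]
  exact cos_le_cos_of_nonneg_of_le_pi (abs_nonneg t) (by linarith [pi_pos]) h

lemma exists_nat_one_half_le_cos_add_nat_mul_of_pos {ψ : ℝ} (hψ : 0 < ψ) (hψ' : ψ ≤ 2 * π / 3)
    (x : ℝ) : ∃ k : ℕ, 1 / 2 ≤ cos (x + k * ψ) := by
  -- `m` indexes the first arc `[2πm - π/3, 2πm + π/3]` to the right of `x`,
  -- and `k` is the first step at which `x + kψ` reaches it.
  set m : ℤ := ⌈(x + π / 3) / (2 * π)⌉
  have hm : x + π / 3 ≤ m * (2 * π) :=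
    (div_le_iff₀ two_pi_pos).1 (Int.le_ceil _)
  set k : ℕ := ⌈(m * (2 * π) - π / 3 - x) / ψ⌉₊
  have hk_ge : m * (2 * π) - π / 3 - x ≤ k * ψ := (div_le_iff₀ hψ).1 (Nat.le_ceil _)
  have hk_lt : k * ψ < m * (2 * π) - π / 3 - x + ψ := by
    have := Nat.ceil_lt_add_one (a := (m * (2 * π) - π / 3 - x) / ψ)
      (div_nonneg (by linarith) hψ.le)
    rwa [← sub_lt_iff_lt_add, lt_div_iff₀ hψ, sub_mul, one_mul, sub_lt_iff_lt_add] at this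
  refine ⟨k, ?_⟩
  rw [← cos_add_int_mul_two_pi _ (-m)]
  apply one_half_le_cos_of_abs_le
  rw [abs_le]
  push_cast
  constructor <;> linarith

lemma exists_nat_one_half_le_cos_add_nat_mul {ψ : ℝ} (hψ : ψ ≠ 0) (hψ' : |ψ| ≤ 2 * π / 3)
    (x : ℝ) : ∃ k : ℕ, 1 / 2 ≤ cos (x + k * ψ) := by
  rcases hψ.lt_or_gt with hneg | hpos
  · rw [abs_of_neg hneg] at hψ'
    obtain ⟨k, hk⟩ := exists_nat_one_half_le_cos_add_nat_mul_of_pos (neg_pos.2 hneg) hψ' (-x)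
    refine ⟨k, ?_⟩
    rwa [← cos_neg, neg_add, ← mul_neg]
  · rw [abs_of_pos hpos] at hψ'
    exact exists_nat_one_half_le_cos_add_nat_mul_of_pos hpos hψ' x

lemma exists_nat_mul_sub_int_mul_two_pi_ne_zero_abs_le {θ : ℝ} (hθ : sin θ ≠ 0) :
    ∃ (j : ℕ) (m : ℤ), j * θ - m * (2 * π) ≠ 0 ∧ |j * θ - m * (2 * π)| ≤ 2 * π / 3 := by
  obtain ⟨m, j, hj_pos, hj_le, hjm⟩ := Real.exists_int_int_abs_mul_sub_le (θ / (2 * π)) two_pos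
  lift j to ℕ using hj_pos.le
  have hscale : j * θ - m * (2 * π) = 2 * π * (j * (θ / (2 * π)) - m) := by
    field_simp
  refine ⟨j, m, ?_, ?_⟩
  · intro h
    apply hθ
    norm_cast at hj_pos hj_le
    interval_cases j
    · exact sin_eq_zero_iff.2 ⟨2 * m, by push_cast at h ⊢; linarith⟩
    · exact sin_eq_zero_iff.2 ⟨m, by push_cast at h; linarith⟩
  · rw [hscale, abs_mul, abs_of_pos two_pi_pos]
    push_cast at hjm
    nlinarith [pi_pos]

lemma frequently_one_half_le_cos_nat_mul_add {θ : ℝ} (hθ : sin θ ≠ 0) (ρ : ℝ) :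
    ∃ᶠ n : ℕ in atTop, 1 / 2 ≤ cos (n * θ + ρ) := by
  obtain ⟨j, m, hψ, hψ'⟩ := exists_nat_mul_sub_int_mul_two_pi_ne_zero_abs_le hθ
  rw [frequently_atTop]
  intro N
  obtain ⟨k, hk⟩ := exists_nat_one_half_le_cos_add_nat_mul hψ hψ' (N * θ + ρ)
  refine ⟨N + k * j, Nat.le_add_right _ _, ?_⟩
  rw [← cos_add_int_mul_two_pi _ (k * m)] at hk
  convert hk using 2
  push_cast
  ring

/-- If `sin θ ≠ 0`, the sequence `cos (nθ + ρ)` is `≥ 1/2` along some strictly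
increasing sequence of indices, and `≤ -1/2` along another one. -/
theorem cos_seq_half_subsequences (θ ρ : ℝ) (hθ : Real.sin θ ≠ 0) :
    (∃ f : ℕ → ℕ, StrictMono f ∧ ∀ j : ℕ, 1 / 2 ≤ Real.cos (f j * θ + ρ)) ∧
    (∃ g : ℕ → ℕ, StrictMono g ∧ ∀ j : ℕ, Real.cos (g j * θ + ρ) ≤ -(1 / 2)) := by
  refine ⟨extraction_of_frequently_atTop (frequently_one_half_le_cos_nat_mul_add hθ ρ),
    extraction_of_frequently_atTop (P := fun n : ℕ => cos (n * θ + ρ) ≤ -(1 / 2)) ?_⟩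
  refine (frequently_one_half_le_cos_nat_mul_add hθ (ρ + π)).mono fun n hn => ?_
  rw [← add_assoc, cos_add_pi] at hn
  linarith
end

section
/- There exist real constants C, C' > 0 such that for all n ≥ 2, |F_5(n) − α_5·n| ≤ C·ln(n) + C'; that is, the deviation of F_5 from its linear equivalent grows at most logarithmically. -/
/-!
Let `A` be the sequence `1, 2, 3, 4, 5, 6, 8, 11, 15, …` with `A (n + 5) = A (n + 4) + A n`.
The function `F 5` is additive along greedy `A`-expansions:
`F 5 (A (m + 4) + x) = A (m + 3) + F 5 x` for `x ≤ A m`. This follows by strong induction from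
`F 5 (n + 1) = n + 1 - (F 5)^[5] n`, since five applications of `F 5` lower the leading term
`A (m + 4)` to `A (m - 1) = A (m + 4) - A (m + 3)`. Hence `F 5 n - α n` is a sum of
`O(log n)` terms `A j - α A (j + 1)` plus a bounded remainder.

These terms are bounded. The characteristic polynomial of `A` is
`X⁵ - X⁴ - 1 = Φ₆(X) (X³ - X - 1)`, and `A j - α A (j + 1)` has no component on the dominant
root `1 / α` of the cubic factor. Applying `Φ₆(X) = X² - X + 1` to the shift (`phi6`) leaves
only the two complex roots, of modulus `√α < 1`, so the result decays geometrically; as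
`Φ₆ ∣ X⁶ - 1`, the differences `t (n + 6) - t n` of `t j = A j - α A (j + 1)` decay as well,
and `t` is bounded.
-/

namespace Hofstadter

theorem iterate_eqOn_Iic {g h : ℕ → ℕ} {N : ℕ} (hgh : ∀ a ≤ N, g a = h a)
    (hg : ∀ a, g a ≤ a) (i : ℕ) : ∀ a ≤ N, g^[i] a = h^[i] a := by
  induction i with
  | zero => intro a _; rfl
  | succ i ih =>
    intro a ha
    rw [Function.iterate_succ_apply, Function.iterate_succ_apply, ← hgh a ha]
    exact ih _ ((hg a).trans ha)

theorem Fa_le (k f n : ℕ) : Fa k f n ≤ n := by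
  match f, n with
  | 0, _ => simp [Fa]
  | _ + 1, 0 => simp [Fa]
  | _ + 1, _ + 1 => exact Nat.sub_le _ _

theorem Fa_succ_fuel (k : ℕ) : ∀ f n, n ≤ f → Fa k (f + 1) n = Fa k f n
  | 0, 0, _ | _ + 1, 0, _ => rfl
  | f + 1, n + 1, hn => by
    change n + 1 - (Fa k (f + 1))^[k] n = n + 1 - (Fa k f)^[k] n
    rw [iterate_eqOn_Iic (fun a ha => Fa_succ_fuel k f a (ha.trans (by omega)))
      (Fa_le k (f + 1)) k n le_rfl]

theorem Fa_eq_F {k f n : ℕ} (hn : n ≤ f) : Fa k f n = F k n := by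
  induction f, hn using Nat.le_induction with
  | base => rfl
  | succ f hf ih => rw [Fa_succ_fuel k f n hf, ih]

theorem F_le (k n : ℕ) : F k n ≤ n := Fa_le k n n

theorem F_zero (k : ℕ) : F k 0 = 0 := rfl

theorem F_succ (k n : ℕ) : F k (n + 1) = n + 1 - (F k)^[k] n := by
  change n + 1 - (Fa k n)^[k] n = _
  rw [iterate_eqOn_Iic (fun a ha => Fa_eq_F ha) (Fa_le k n) k n le_rfl]

theorem iterate_F_le (k i n : ℕ) : (F k)^[i] n ≤ n :=
  Function.antitone_iterate_of_le_id (F_le k) (Nat.zero_le i) n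

theorem F_succ_eq_or (k n : ℕ) : F k (n + 1) = F k n ∨ F k (n + 1) = F k n + 1 := by
  induction n using Nat.strong_induction_on with
  | _ n ih =>
    cases n with
    | zero => right; rw [F_succ, Function.iterate_fixed (F_zero k), F_zero]
    | succ m =>
      have hiter : ∀ i, (F k)^[i] (m + 1) = (F k)^[i] m ∨
          (F k)^[i] (m + 1) = (F k)^[i] m + 1 := by
        intro i
        induction i with
        | zero => right; rfl
        | succ i hi =>
          simp only [Function.iterate_succ_apply']
          rcases hi with h | h <;> rw [h]
          · left; rfl
          · exact ih _ (Nat.lt_succ_of_le (iterate_F_le k i m))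
      have := iterate_F_le k k m
      have := hiter k
      rw [F_succ k (m + 1), F_succ k m]
      omega

theorem F_mono (k : ℕ) : Monotone (F k) :=
  monotone_nat_of_le_succ fun n => by rcases F_succ_eq_or k n with h | h <;> omega

def A : ℕ → ℕ
  | 0 => 1
  | 1 => 2
  | 2 => 3
  | 3 => 4
  | 4 => 5
  | n + 5 => A (n + 4) + A n

theorem A_add_five (n : ℕ) : A (n + 5) = A (n + 4) + A n := by rw [A]

theorem A_pos : ∀ n, 0 < A n
  | 0 | 1 | 2 | 3 | 4 => by decide
  | n + 5 => by rw [A_add_five]; exact Nat.add_pos_left (A_pos (n + 4)) _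

theorem A_strictMono : StrictMono A :=
  strictMono_nat_of_lt_succ fun
    | 0 | 1 | 2 | 3 => by decide
    | n + 4 => by rw [A_add_five]; exact Nat.lt_add_of_pos_right (A_pos n)

theorem two_pow_le_A (q : ℕ) : 2 ^ q ≤ A (5 * q) := by
  induction q with
  | zero => decide
  | succ q ih =>
    have := A_strictMono.monotone (show 5 * q ≤ 5 * q + 4 by omega)
    rw [show 5 * (q + 1) = 5 * q + 5 by ring, A_add_five, pow_succ]
    omega

def ShiftHoldsBelow (n : ℕ) : Prop :=
  ∀ m x, A (m + 4) + x < n → x ≤ A m → F 5 (A (m + 4) + x) = A (m + 3) + F 5 x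

section ShiftHoldsBelow

variable {n : ℕ} (hS : ShiftHoldsBelow n)
include hS

theorem F_A_succ_of_shiftHoldsBelow : ∀ {j}, A (j + 1) < n → F 5 (A (j + 1)) = A j
  | 0, _ | 1, _ | 2, _ => by simp [A, F_succ, F_zero]
  | j + 3, hj => by simpa [F_zero] using hS j 0 (by simpa using hj) (Nat.zero_le _)

theorem F_le_A_of_shiftHoldsBelow {j y : ℕ} (hy : y ≤ A (j + 1)) (hj : A (j + 1) < n) :
    F 5 y ≤ A j :=
  (F_mono 5 hy).trans (F_A_succ_of_shiftHoldsBelow hS hj).le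

theorem iterate_F_A_add_of_shiftHoldsBelow (l : ℕ) :
    ∀ i y, y ≤ A (l + i) → A (l + i + 4) + y < n →
      (F 5)^[i + 1] (A (l + i + 4) + y) = A (l + 3) + (F 5)^[i + 1] y
  | 0, y, hy, hn => hS l y hn hy
  | i + 1, y, hy, hn => by
    have hshift : F 5 (A (l + i + 5) + y) = A (l + i + 4) + F 5 y := hS (l + i + 1) y hn hy
    have hFy : F 5 y ≤ A (l + i) :=
      F_le_A_of_shiftHoldsBelow hS hy ((A_strictMono.monotone (by omega)).trans_lt
        (Nat.lt_of_add_right_lt hn))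
    have hlt : A (l + i + 4) + F 5 y < n := by
      have := F_le 5 (A (l + i + 5) + y)
      rw [hshift] at this
      change A (l + i + 5) + y < n at hn
      omega
    rw [Function.iterate_succ_apply, show l + (i + 1) + 4 = l + i + 5 by ring, hshift,
      iterate_F_A_add_of_shiftHoldsBelow l i (F 5 y) hFy hlt]
    rfl

end ShiftHoldsBelow

theorem F_A_add_succ_of_shiftHoldsBelow {l y : ℕ} (hS : ShiftHoldsBelow (A (l + 8) + (y + 1)))
    (hy : y + 1 ≤ A (l + 4)) : F 5 (A (l + 8) + (y + 1)) = A (l + 7) + F 5 (y + 1) := by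
  have h5 : (F 5)^[5] (A (l + 8) + y) = A (l + 3) + (F 5)^[5] y :=
    iterate_F_A_add_of_shiftHoldsBelow hS l 4 y (by omega) (show A (l + 8) + y < _ by omega)
  have := iterate_F_le 5 5 y
  have : A (l + 8) = A (l + 7) + A (l + 3) := A_add_five (l + 3)
  rw [← add_assoc, F_succ, F_succ, h5]
  omega

theorem F_A_of_shiftHoldsBelow {l : ℕ} (hS : ShiftHoldsBelow (A (l + 9))) :
    F 5 (A (l + 9)) = A (l + 8) := by
  have hA : A (l + 9) = A (l + 8) + (A (l + 4) - 1 + 1) := by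
    rw [Nat.sub_add_cancel (A_pos _)]; exact A_add_five (l + 4)
  have hA4 : A (l + 4) < A (l + 9) := A_strictMono (by omega)
  have hA8 : A (l + 8) = A (l + 7) + A (l + 3) := A_add_five (l + 3)
  have hF4 : F 5 (A (l + 4)) = A (l + 3) := F_A_succ_of_shiftHoldsBelow hS hA4
  rw [hA] at hS ⊢
  rw [F_A_add_succ_of_shiftHoldsBelow hS (Nat.sub_add_cancel (A_pos _)).le,
    Nat.sub_add_cancel (A_pos _), hF4, hA8]

theorem F_A_add_of_lt_four : ∀ m < 4, ∀ x ≤ A m, F 5 (A (m + 4) + x) = A (m + 3) + F 5 x := by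
  intro m hm x hx
  interval_cases m <;> simp only [A] at hx ⊢ <;> interval_cases x <;> simp [F_succ, F_zero]

theorem F_A_add {m x : ℕ} (hx : x ≤ A m) : F 5 (A (m + 4) + x) = A (m + 3) + F 5 x := by
  suffices ∀ n, ShiftHoldsBelow n from this _ m x (Nat.lt_succ_self _) hx
  intro n
  induction n with
  | zero => intro m x h; omega
  | succ n ih =>
    intro m x hlt hx
    rcases Nat.lt_succ_iff_lt_or_eq.mp hlt with hlt | rfl
    · exact ih m x hlt hx
    by_cases hm : m < 4
    · exact F_A_add_of_lt_four m hm x hx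
    obtain ⟨l, rfl⟩ : ∃ l, m = l + 4 := ⟨m - 4, by omega⟩
    rcases x with _ | y
    · rcases l with _ | l
      · simp [A, F_succ, F_zero] -- `F 5 15 = 11`
      · simpa [F_zero] using F_A_of_shiftHoldsBelow ih
    · exact F_A_add_succ_of_shiftHoldsBelow ih hx

theorem exists_abs_le_mul_pow_of_recurrence {w : ℕ → ℝ} {b ρ : ℝ} (hρ : 0 ≤ ρ)
    (hbρ : b ^ 2 < 4 * ρ ^ 2) (hw : ∀ n, w (n + 2) + b * w (n + 1) + ρ ^ 2 * w n = 0) :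
    ∃ K, ∀ n, |w n| ≤ K * ρ ^ n := by
  -- `Q` is multiplied by `ρ ^ 2` at each step, and it is positive definite since `b ^ 2 < 4 ρ ^ 2`.
  set Q : ℕ → ℝ := fun n => w (n + 1) ^ 2 + b * w n * w (n + 1) + ρ ^ 2 * w n ^ 2
  have hQ : ∀ n, Q n = (ρ ^ n) ^ 2 * Q 0 := by
    intro n
    induction n with
    | zero => simp
    | succ n ih =>
      have h2 : w (n + 2) = -b * w (n + 1) - ρ ^ 2 * w n := by linear_combination hw n
      rw [show (ρ ^ (n + 1)) ^ 2 * Q 0 = ρ ^ 2 * ((ρ ^ n) ^ 2 * Q 0) by ring, ← ih]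
      change w (n + 2) ^ 2 + b * w (n + 1) * w (n + 2) + ρ ^ 2 * w (n + 1) ^ 2 = _
      rw [h2]
      ring
  have hd : 0 < ρ ^ 2 - b ^ 2 / 4 := by linarith
  have hQ0 : 0 ≤ Q 0 := by nlinarith [sq_nonneg (w 1 + b / 2 * w 0), sq_nonneg (w 0)]
  refine ⟨√(Q 0 / (ρ ^ 2 - b ^ 2 / 4)), fun n => abs_le_of_sq_le_sq ?_ (by positivity)⟩
  rw [mul_pow, Real.sq_sqrt (by positivity), div_mul_eq_mul_div, le_div_iff₀ hd,
    mul_comm (Q 0), ← hQ]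
  nlinarith [sq_nonneg (w (n + 1) + b / 2 * w n)]

theorem exists_abs_le_of_abs_sub_le_geometric {t : ℕ → ℝ} {p : ℕ} (hp : 0 < p) {K r : ℝ}
    (hr0 : 0 ≤ r) (hr1 : r < 1) (h : ∀ n, |t (n + p) - t n| ≤ K * r ^ n) :
    ∃ M, ∀ n, |t n| ≤ M := by
  have hK : 0 ≤ K := by simpa using (abs_nonneg _).trans (h 0)
  set M₀ := ∑ i ∈ Finset.range p, |t i|
  have hsum : ∀ n, |t n| ≤ M₀ + K * ∑ i ∈ Finset.range n, r ^ i := by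
    intro n
    induction n using Nat.strong_induction_on with
    | _ n ih =>
      by_cases hn : n < p
      · have : |t n| ≤ M₀ :=
          Finset.single_le_sum (fun i _ => abs_nonneg (t i)) (Finset.mem_range.mpr hn)
        have : 0 ≤ K * ∑ i ∈ Finset.range n, r ^ i :=
          mul_nonneg hK (Finset.sum_nonneg fun i _ => pow_nonneg hr0 i)
        linarith
      obtain ⟨m, rfl⟩ : ∃ m, n = m + p := ⟨n - p, by omega⟩
      calc |t (m + p)| ≤ |t m| + |t (m + p) - t m| := by
            linarith [abs_sub_abs_le_abs_sub (t (m + p)) (t m)]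
        _ ≤ M₀ + K * ∑ i ∈ Finset.range m, r ^ i + K * r ^ m :=
          add_le_add (ih m (by omega)) (h m)
        _ = M₀ + K * ∑ i ∈ Finset.range (m + 1), r ^ i := by
          rw [Finset.sum_range_succ]; ring
        _ ≤ M₀ + K * ∑ i ∈ Finset.range (m + p), r ^ i := by
          gcongr M₀ + K * ?_
          exact Finset.sum_le_sum_of_subset_of_nonneg
            (Finset.range_subset_range.mpr (show m + 1 ≤ m + p by omega))
            fun i _ _ => pow_nonneg hr0 i
  refine ⟨M₀ + K / (1 - r), fun n => (hsum n).trans ?_⟩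
  have := geom_sum_Ico_le_of_lt_one (m := 0) (n := n) hr0 hr1
  rw [← Finset.range_eq_Ico, pow_zero] at this
  rw [div_eq_mul_one_div]
  gcongr

def phi6 (t : ℕ → ℝ) (n : ℕ) : ℝ := t (n + 2) - t (n + 1) + t n

theorem add_six_sub_eq_phi6 (t : ℕ → ℝ) (n : ℕ) :
    t (n + 6) - t n = phi6 t (n + 4) + phi6 t (n + 3) - phi6 t (n + 1) - phi6 t n := by
  simp only [phi6]
  ring_nf

theorem phi6_add_three {t : ℕ → ℝ} (ht : ∀ n, t (n + 5) = t (n + 4) + t n) (n : ℕ) :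
    phi6 t (n + 3) = phi6 t (n + 1) + phi6 t n := by
  change t (n + 5) - t (n + 4) + t (n + 3)
    = (t (n + 3) - t (n + 2) + t (n + 1)) + (t (n + 2) - t (n + 1) + t n)
  rw [ht n]
  ring

theorem quadratic_recurrence_of_cubic_recurrence {w : ℕ → ℝ} {α : ℝ} (hα : α ^ 3 + α ^ 2 = 1)
    (hw : ∀ n, w (n + 3) = w (n + 1) + w n) (h0 : α * w 2 + w 1 + α ^ 2 * w 0 = 0) :
    ∀ n, α * w (n + 2) + w (n + 1) + α ^ 2 * w n = 0 := by
  have hα0 : α ≠ 0 := by rintro rfl; norm_num at hα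
  intro n
  induction n with
  | zero => exact h0
  | succ n ih =>
    -- `α E (n + 1) = E n` for the left-hand side `E n`
    refine (mul_eq_zero.mp ?_).resolve_left hα0
    rw [← ih, show n + 1 + 2 = n + 3 by ring, hw n]
    linear_combination w (n + 1) * hα

noncomputable def errA (α : ℝ) (n : ℕ) : ℝ := A n - α * A (n + 1)

theorem errA_add_five (α : ℝ) (n : ℕ) : errA α (n + 5) = errA α (n + 4) + errA α n := by
  have h5 : (A (n + 5) : ℝ) = A (n + 4) + A n := by exact_mod_cast A_add_five n
  have h6 : (A (n + 6) : ℝ) = A (n + 5) + A (n + 1) := by exact_mod_cast A_add_five (n + 1)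
  change (A (n + 5) : ℝ) - α * A (n + 6) = (A (n + 4) - α * A (n + 5)) + (A n - α * A (n + 1))
  linear_combination h5 - α * h6

theorem phi6_errA_recurrence {α : ℝ} (hα : α ^ 3 + α ^ 2 = 1) (n : ℕ) :
    α * phi6 (errA α) (n + 2) + phi6 (errA α) (n + 1) + α ^ 2 * phi6 (errA α) n = 0 := by
  refine quadratic_recurrence_of_cubic_recurrence hα (phi6_add_three (errA_add_five α)) ?_ n
  simp [phi6, errA, A]
  linear_combination (-3) * hα

theorem exists_abs_errA_le {α : ℝ} (hα0 : 0 < α) (hα1 : α < 1) (hα : α ^ 3 + α ^ 2 = 1) :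
    ∃ M, ∀ n, |errA α n| ≤ M := by
  set w := phi6 (errA α)
  have hrec : ∀ n, w (n + 2) + α⁻¹ * w (n + 1) + √α ^ 2 * w n = 0 := by
    intro n
    rw [Real.sq_sqrt hα0.le]
    field_simp
    linear_combination phi6_errA_recurrence hα n
  have hdisc : α⁻¹ ^ 2 < 4 * √α ^ 2 := by
    rw [Real.sq_sqrt hα0.le, inv_pow]
    field_simp
    nlinarith
  obtain ⟨K, hK⟩ := exists_abs_le_mul_pow_of_recurrence (Real.sqrt_nonneg α) hdisc hrec
  have hr : √α < 1 := (Real.sqrt_lt' one_pos).mpr (by rwa [one_pow])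
  have hK0 : 0 ≤ K := by simpa using (abs_nonneg _).trans (hK 0)
  have hw : ∀ n j, |w (n + j)| ≤ K * √α ^ n := fun n j =>
    (hK _).trans (mul_le_mul_of_nonneg_left
      (pow_le_pow_of_le_one (Real.sqrt_nonneg α) hr.le (Nat.le_add_right n j)) hK0)
  refine exists_abs_le_of_abs_sub_le_geometric (p := 6) (K := 4 * K) (by norm_num)
    (Real.sqrt_nonneg α) hr fun n => ?_
  rw [add_six_sub_eq_phi6]
  have h4 := hw n 4
  have h3 := hw n 3
  have h1 := hw n 1
  have h0 := hw n 0
  rw [add_zero] at h0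
  rw [abs_le] at *
  constructor <;> linarith

theorem abs_F_sub_mul_le (k n : ℕ) {α : ℝ} (hα0 : 0 ≤ α) (hα1 : α ≤ 1) :
    |(F k n : ℝ) - α * n| ≤ n := by
  simpa using abs_sub_le_of_le_of_le (Nat.cast_nonneg (F k n)) (by exact_mod_cast F_le k n)
    (mul_nonneg hα0 n.cast_nonneg) (mul_le_of_le_one_left n.cast_nonneg hα1)

theorem abs_F_five_sub_mul_le_of_lt_A {α M : ℝ} (hα0 : 0 ≤ α) (hα1 : α ≤ 1)
    (hM : ∀ n, |errA α n| ≤ M) : ∀ j, ∀ n < A j, |(F 5 n : ℝ) - α * n| ≤ M * j + 5 := by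
  have hM0 : 0 ≤ M := (abs_nonneg _).trans (hM 0)
  intro j
  induction j using Nat.strong_induction_on with
  | _ j ih =>
    intro n hn
    by_cases hj : j ≤ 5
    · have hn5 : n ≤ 5 := by
        have := A_strictMono.monotone hj
        simp only [A] at this
        omega
      have : (n : ℝ) ≤ 5 := by exact_mod_cast hn5
      have := abs_F_sub_mul_le 5 n hα0 hα1
      have : 0 ≤ M * j := by positivity
      linarith
    obtain ⟨m, rfl⟩ : ∃ m, j = m + 5 := ⟨j - 5, by omega⟩
    by_cases hn4 : n < A (m + 4)
    · have := ih (m + 4) (by omega) n hn4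
      push_cast at this ⊢
      linarith
    obtain ⟨x, rfl⟩ : ∃ x, n = A (m + 4) + x := ⟨n - A (m + 4), by omega⟩
    have hx : x < A m := by rw [A_add_five] at hn; omega
    have hdecomp : (F 5 (A (m + 4) + x) : ℝ) - α * ↑(A (m + 4) + x)
        = errA α (m + 3) + ((F 5 x : ℝ) - α * x) := by
      rw [F_A_add hx.le, errA]
      push_cast
      ring
    have := ih m (by omega) x hx
    rw [hdecomp]
    calc _ ≤ |errA α (m + 3)| + |(F 5 x : ℝ) - α * x| := abs_add_le _ _
      _ ≤ M + (M * m + 5) := add_le_add (hM _) this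
      _ ≤ M * ↑(m + 5) + 5 := by push_cast; nlinarith

theorem cube_add_sq_eq_one_of_pow_five_add_eq_one {α : ℝ} (h : α ^ 5 + α - 1 = 0) :
    α ^ 3 + α ^ 2 = 1 := by
  have hfac : (α ^ 2 - α + 1) * (α ^ 3 + α ^ 2 - 1) = 0 := by linear_combination h
  have : α ^ 2 - α + 1 ≠ 0 := by nlinarith [sq_nonneg (α - 1 / 2)]
  linear_combination (mul_eq_zero.mp hfac).resolve_left this

end Hofstadter

/-- The deviation of `F_5` from its linear equivalent `α_5 n` grows at most
logarithmically: `|F_5 n - α_5 n| ≤ C ln n + C'` for all `n ≥ 2`. -/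
theorem discrepancy_five_log_bound (α : ℝ)
    (hα : α ∈ Set.Ioo (0 : ℝ) 1) (hαroot : α ^ 5 + α - 1 = 0) :
    ∃ C C' : ℝ, 0 < C ∧ 0 < C' ∧
      ∀ n : ℕ, 2 ≤ n → |(F 5 n : ℝ) - α * n| ≤ C * Real.log n + C' := by
  obtain ⟨hα0, hα1⟩ := hα
  obtain ⟨M, hM⟩ := Hofstadter.exists_abs_errA_le hα0 hα1
    (Hofstadter.cube_add_sq_eq_one_of_pow_five_add_eq_one hαroot)
  set M' := max M 1
  refine ⟨5 * M' / Real.log 2, 5 * M' + 5, by positivity, by positivity, fun n _ => ?_⟩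
  have hn : n < Hofstadter.A (5 * (Nat.log 2 n + 1)) :=
    (Nat.lt_pow_succ_log_self one_lt_two n).trans_le (Hofstadter.two_pow_le_A _)
  have hlog : (Nat.log 2 n : ℝ) ≤ Real.log n / Real.log 2 := by
    simpa [Real.logb] using Real.natLog_le_logb n 2
  calc |(F 5 n : ℝ) - α * n| ≤ M' * ↑(5 * (Nat.log 2 n + 1)) + 5 :=
        Hofstadter.abs_F_five_sub_mul_le_of_lt_A hα0.le hα1.le
          (fun k => (hM k).trans (le_max_left M 1)) _ n hn
    _ = 5 * M' * Nat.log 2 n + (5 * M' + 5) := by push_cast; ring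
    _ ≤ 5 * M' * (Real.log n / Real.log 2) + (5 * M' + 5) := by gcongr
    _ = 5 * M' / Real.log 2 * Real.log n + (5 * M' + 5) := by ring
end
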